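/- Let R, R_c ∈ SO(3), Ψ(R,R_c) = (1/2) tr(I − R_cᵀR), and e_R = (1/2)(R_cᵀR − RᵀR_c)^∨. Then ‖e_R‖² = Ψ(R,R_c)(2 − Ψ(R,R_c)). Consequently, if Ψ(R,R_c) ≤ ψ₁ < 1 then ‖e_R‖ ≤ √(ψ₁(2−ψ₁)) < 1. -/

import Mathlib

open Matrix

noncomputable section

/-- The hat map `ℝ³ → 𝔰𝔬(3)`, with `hat x *ᵥ y = x × y`. -/
def hat (x : Fin 3 → ℝ) : Matrix (Fin 3) (Fin 3) ℝ :=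
  !![0, -x 2, x 1; x 2, 0, -x 0; -x 1, x 0, 0]

/-- The vee map, inverse of the hat map on skew-symmetric matrices. -/
def vee (A : Matrix (Fin 3) (Fin 3) ℝ) : Fin 3 → ℝ :=
  ![A 2 1, A 0 2, A 1 0]

/-- Membership in the special orthogonal group SO(3). -/
def SO3 (R : Matrix (Fin 3) (Fin 3) ℝ) : Prop :=
  Rᵀ * R = 1 ∧ R.det = 1

/-- Euclidean norm on `ℝ³` (and `ℝ²`). -/
def norm3 (x : Fin 3 → ℝ) : ℝ := Real.sqrt (x ⬝ᵥ x)

def norm2v (x : Fin 2 → ℝ) : ℝ := Real.sqrt (x ⬝ᵥ x)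

/-- Attitude error function `Ψ(R,R_d) = (1/2) tr (G (I - R_dᵀ R))`. -/
def Psi (G R Rd : Matrix (Fin 3) (Fin 3) ℝ) : ℝ :=
  (1 / 2) * (G * (1 - Rdᵀ * R)).trace

/-- Attitude error vector `e_R = (1/2) (G R_dᵀ R - Rᵀ R_d G)^∨`. -/
def eR (G R Rd : Matrix (Fin 3) (Fin 3) ℝ) : Fin 3 → ℝ :=
  (1 / 2 : ℝ) • vee (G * Rdᵀ * R - Rᵀ * Rd * G)

/-- Third standard basis vector of `ℝ³`. -/
def e3 : Fin 3 → ℝ := ![0, 0, 1]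

/-!
With `Q = R_cᵀ R ∈ SO(3)` and `t = tr Q` one has `Ψ = (3 - t) / 2` and
`4 ‖e_R‖² = ‖(Q - Qᵀ)^∨‖² = tr (Qᵀ Q) - tr (Q²)`. For a `3 × 3` matrix
`tr (Q²) = t² - 2 tr (adj Q)`, and `adj Q = Qᵀ` on `SO(3)`, so
`4 ‖e_R‖² = 3 - t² + 2t = (3 - t)(1 + t) = 4 Ψ (2 - Ψ)`.
The bounds follow because `ψ ↦ ψ (2 - ψ) = 1 - (1 - ψ)²` is increasing on `ψ ≤ 1`.
-/

theorem dotProduct_vee_sub_transpose (A : Matrix (Fin 3) (Fin 3) ℝ) :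
    vee (A - Aᵀ) ⬝ᵥ vee (A - Aᵀ) = (Aᵀ * A).trace - (A * A).trace := by
  simp only [vee, dotProduct, trace, diag, mul_apply, Matrix.sub_apply, transpose_apply,
    Fin.sum_univ_three, cons_val_zero, cons_val_one, cons_val_two, head_cons, tail_cons]
  ring

theorem Matrix.trace_mul_self_fin_three {α : Type*} [CommRing α]
    (A : Matrix (Fin 3) (Fin 3) α) :
    (A * A).trace = A.trace ^ 2 - 2 * A.adjugate.trace := by
  simp only [adjugate_fin_three, trace, diag, mul_apply, Fin.sum_univ_three, of_apply,
    cons_val_zero, cons_val_one, cons_val_two, head_cons, tail_cons]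
  ring

namespace SO3

variable {Q : Matrix (Fin 3) (Fin 3) ℝ}

theorem mul_transpose_self (hQ : SO3 Q) : Q * Qᵀ = 1 :=
  mul_eq_one_comm.mp hQ.1

theorem transpose_mul {Rc R : Matrix (Fin 3) (Fin 3) ℝ} (hRc : SO3 Rc) (hR : SO3 R) :
    SO3 (Rcᵀ * R) := by
  refine ⟨?_, ?_⟩
  · rw [Matrix.transpose_mul, transpose_transpose, Matrix.mul_assoc, ← Matrix.mul_assoc Rc,
      hRc.mul_transpose_self, Matrix.one_mul, hR.1]
  · rw [det_mul, det_transpose, hR.2, hRc.2, mul_one]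

theorem adjugate_eq_transpose (hQ : SO3 Q) : Q.adjugate = Qᵀ := by
  calc Q.adjugate = Qᵀ * Q * Q.adjugate := by rw [hQ.1, Matrix.one_mul]
    _ = Qᵀ := by rw [Matrix.mul_assoc, mul_adjugate, hQ.2, one_smul, Matrix.mul_one]

theorem trace_mul_self (hQ : SO3 Q) : (Q * Q).trace = Q.trace ^ 2 - 2 * Q.trace := by
  rw [trace_mul_self_fin_three, hQ.adjugate_eq_transpose, trace_transpose]

theorem dotProduct_vee_sub_transpose (hQ : SO3 Q) :
    vee (Q - Qᵀ) ⬝ᵥ vee (Q - Qᵀ) = (3 - Q.trace) * (1 + Q.trace) := by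
  rw [_root_.dotProduct_vee_sub_transpose, hQ.1, hQ.trace_mul_self, trace_one, Fintype.card_fin]
  push_cast
  ring

end SO3

theorem Psi_one_eq (R Rc : Matrix (Fin 3) (Fin 3) ℝ) :
    Psi 1 R Rc = (3 - (Rcᵀ * R).trace) / 2 := by
  rw [Psi, Matrix.one_mul, trace_sub, trace_one, Fintype.card_fin]
  push_cast
  ring

theorem eR_one_eq (R Rc : Matrix (Fin 3) (Fin 3) ℝ) :
    eR 1 R Rc = (1 / 2 : ℝ) • vee (Rcᵀ * R - (Rcᵀ * R)ᵀ) := by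
  rw [eR, Matrix.one_mul, Matrix.mul_one, Matrix.transpose_mul, transpose_transpose]

theorem norm3_sq (x : Fin 3 → ℝ) : norm3 x ^ 2 = x ⬝ᵥ x :=
  Real.sq_sqrt (Finset.sum_nonneg fun i _ => mul_self_nonneg (x i))

theorem mul_two_sub_le_mul_two_sub {a b : ℝ} (hab : a ≤ b) (hb : b ≤ 1) :
    a * (2 - a) ≤ b * (2 - b) := by
  nlinarith

theorem sqrt_mul_two_sub_lt_one {a : ℝ} (ha : a < 1) : Real.sqrt (a * (2 - a)) < 1 := by
  rw [Real.sqrt_lt' one_pos]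
  nlinarith

/-- `‖e_R‖² = Ψ (2 − Ψ)`, and if `Ψ ≤ ψ₁ < 1` then
`‖e_R‖ ≤ √(ψ₁(2−ψ₁)) < 1`. -/
theorem eR_norm_sq_eq_psi (R Rc : Matrix (Fin 3) (Fin 3) ℝ)
    (hR : SO3 R) (hRc : SO3 Rc) :
    norm3 (eR 1 R Rc) ^ 2 = Psi 1 R Rc * (2 - Psi 1 R Rc) ∧
    ∀ ψ₁ : ℝ, ψ₁ < 1 → Psi 1 R Rc ≤ ψ₁ →
      norm3 (eR 1 R Rc) ≤ Real.sqrt (ψ₁ * (2 - ψ₁)) ∧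
      Real.sqrt (ψ₁ * (2 - ψ₁)) < 1 := by
  have hsq : norm3 (eR 1 R Rc) ^ 2 = Psi 1 R Rc * (2 - Psi 1 R Rc) := by
    rw [norm3_sq, eR_one_eq, dotProduct_smul, smul_dotProduct,
      (hRc.transpose_mul hR).dotProduct_vee_sub_transpose, Psi_one_eq]
    simp only [smul_eq_mul]
    ring
  refine ⟨hsq, fun ψ₁ hψ₁ hle => ⟨?_, sqrt_mul_two_sub_lt_one hψ₁⟩⟩
  refine (le_abs_self _).trans (Real.abs_le_sqrt ?_)
  exact hsq ▸ mul_two_sub_le_mul_two_sub hle hψ₁.le
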